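/- The Jacobian of the closed-loop RFM has the sign pattern of a 2-cooperative system throughout the unit cube: for every x ∈ [0,1]^n, the Jacobian J(x) satisfies J(x)_{i,i+1} = λ_i x_i ≥ 0 and J(x)_{i+1,i} = λ_i (1 − x_{i+1}) ≥ 0 for i = 1, …, n−1, the corner entry J(x)_{1,n} = λ_0 λ_n k (1 − x_1) g'(λ_n x_n) (from the feedback term) is ≤ 0, and every other off-diagonal entry of J(x) is zero. -/

import Mathlib

open scoped BigOperators
open Filter Topology

/-- Extend a vector `x : Fin n → ℝ` to a function on `ℕ` (zero outside the range). -/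
noncomputable def extVec {n : ℕ} (x : Fin n → ℝ) (j : ℕ) : ℝ :=
  if h : j < n then x ⟨j, h⟩ else 0

/-- The flow from site `j` to site `j+1` (1-based paper indexing of the rates;
`j = 0` is the initiation flow, `j = n` is the exit flow) in the closed-loop
ribosome flow model with negative feedback `u = k g(y)`. Densities are stored
0-based: Lean index `i` corresponds to the paper's site `i+1`. -/
noncomputable def rfmFlow (n : ℕ) (lam : ℕ → ℝ) (k : ℝ) (g : ℝ → ℝ)
    (x : Fin n → ℝ) (j : ℕ) : ℝ :=
  if j = 0 then lam 0 * k * g (lam n * extVec x (n - 1)) * (1 - extVec x 0)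
  else if j = n then lam n * extVec x (n - 1)
  else lam j * extVec x (j - 1) * (1 - extVec x j)

/-- The vector field of the closed-loop RFM with negative feedback. -/
noncomputable def rfmField (n : ℕ) (lam : ℕ → ℝ) (k : ℝ) (g : ℝ → ℝ)
    (x : Fin n → ℝ) : Fin n → ℝ :=
  fun i => rfmFlow n lam k g x i.val - rfmFlow n lam k g x (i.val + 1)

/-- The Jacobian matrix of the closed-loop RFM vector field:
`J(x)_{ij}` is the partial derivative of `f_i` with respect to `x_j` at `x`. -/
noncomputable def rfmJac (n : ℕ) (lam : ℕ → ℝ) (k : ℝ) (g : ℝ → ℝ)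
    (x : Fin n → ℝ) : Matrix (Fin n) (Fin n) ℝ :=
  Matrix.of fun i j =>
    deriv (fun s => rfmField n lam k g (Function.update x j s) i) (x j)

lemma extVec_update {n : ℕ} (x : Fin n → ℝ) (j : Fin n) (s : ℝ) (m : ℕ) :
    extVec (Function.update x j s) m = if m = (j : ℕ) then s else extVec x m := by
  unfold extVec
  rcases eq_or_ne m (j : ℕ) with h | h
  · subst h
    simp [j.isLt]
  · simp only [if_neg h]
    split_ifs with h1
    · rw [Function.update_of_ne (by simpa [Fin.ext_iff] using h)]
    · rfl

lemma extVec_of_lt {n : ℕ} (x : Fin n → ℝ) {m : ℕ} (h : m < n) :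
    extVec x m = x ⟨m, h⟩ := dif_pos h

lemma rfmFlow_update_eq {n : ℕ} (lam : ℕ → ℝ) (k : ℝ) (g : ℝ → ℝ)
    (x : Fin n → ℝ) (j : Fin n) (s : ℝ) (m : ℕ)
    (h0 : m = 0 → (j : ℕ) ≠ 0 ∧ (j : ℕ) ≠ n - 1)
    (h1 : m ≠ 0 → (j : ℕ) ≠ m - 1 ∧ (j : ℕ) ≠ m) :
    rfmFlow n lam k g (Function.update x j s) m = rfmFlow n lam k g x m := by
  unfold rfmFlow
  split_ifs with hm hn
  · obtain ⟨a, b⟩ := h0 hm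
    rw [extVec_update, extVec_update, if_neg (by omega), if_neg (by omega)]
  · obtain ⟨a, b⟩ := h1 hm
    rw [extVec_update, if_neg (by omega)]
  · obtain ⟨a, b⟩ := h1 hm
    rw [extVec_update, extVec_update, if_neg (by omega), if_neg (by omega)]

lemma deriv_form1 (C B t : ℝ) : deriv (fun s => C - B * (1 - s)) t = B := by
  have h : HasDerivAt (fun s : ℝ => C - B * (1 - s)) B t := by
    have h1 := ((hasDerivAt_const t (1:ℝ)).sub (hasDerivAt_id t)).const_mul B
    have h2 := (hasDerivAt_const t C).sub h1
    exact h2.congr_deriv (by ring)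
  exact h.deriv

lemma deriv_form2 (B D C t : ℝ) : deriv (fun s => B * s * (1 - D) - C) t = B * (1 - D) := by
  have h : HasDerivAt (fun s : ℝ => B * s * (1 - D) - C) (B * (1 - D)) t := by
    have h1 := (((hasDerivAt_id t).const_mul B).mul_const (1 - D)).sub (hasDerivAt_const t C)
    exact h1.congr_deriv (by ring)
  exact h.deriv

/-- The Jacobian of the closed-loop RFM has the sign pattern of
a 2-cooperative system on the unit cube: nonnegative sub/super-diagonal entries
(with explicit formulas), a nonpositive corner entry `J(x)_{1,n}` coming from
the feedback, and all other off-diagonal entries zero. (Lean indices are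
0-based: the paper's entry `(1,n)` is the entry `(0, n-1)`.) -/
theorem rfm_negfb_jacobian_sign_pattern
    (n : ℕ) (hn : 3 ≤ n) (lam : ℕ → ℝ) (hlam : ∀ i, i ≤ n → 0 < lam i)
    (k : ℝ) (hk : 0 < k)
    (g : ℝ → ℝ) (hg : ContDiff ℝ 1 g) (hgpos : ∀ z : ℝ, 0 ≤ z → 0 < g z)
    (hgder : ∀ z : ℝ, 0 < z → deriv g z < 0)
    (x : Fin n → ℝ) (hx : ∀ i, x i ∈ Set.Icc (0:ℝ) 1) :
    (∀ i : Fin n, ∀ h : i.val + 1 < n,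
      rfmJac n lam k g x i ⟨i.val + 1, h⟩ = lam (i.val + 1) * x i ∧
      0 ≤ rfmJac n lam k g x i ⟨i.val + 1, h⟩ ∧
      rfmJac n lam k g x ⟨i.val + 1, h⟩ i = lam (i.val + 1) * (1 - x ⟨i.val + 1, h⟩) ∧
      0 ≤ rfmJac n lam k g x ⟨i.val + 1, h⟩ i) ∧
    (rfmJac n lam k g x ⟨0, by omega⟩ ⟨n - 1, by omega⟩ =
      lam 0 * lam n * k * (1 - x ⟨0, by omega⟩) * deriv g (lam n * x ⟨n - 1, by omega⟩)) ∧
    (rfmJac n lam k g x ⟨0, by omega⟩ ⟨n - 1, by omega⟩ ≤ 0) ∧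
    (∀ i j : Fin n, i ≠ j → j.val ≠ i.val + 1 → i.val ≠ j.val + 1 →
      ¬(i.val = 0 ∧ j.val = n - 1) → rfmJac n lam k g x i j = 0) := by
  have hgdiff : Differentiable ℝ g := hg.differentiable one_ne_zero
  have hder_le : ∀ z : ℝ, 0 ≤ z → deriv g z ≤ 0 := by
    intro z hz
    rcases hz.eq_or_lt with rfl | h
    · have hc : Tendsto (deriv g) (𝓝[>] (0:ℝ)) (𝓝 (deriv g 0)) :=
        ((hg.continuous_deriv le_rfl).continuousAt).tendsto.mono_left nhdsWithin_le_nhds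
      refine le_of_tendsto hc ?_
      filter_upwards [self_mem_nhdsWithin] with w hw
      exact (hgder w hw).le
    · exact (hgder z h).le
  have hn0 : (0:ℕ) < n := by omega
  have hn1 : n - 1 < n := by omega
  have hcorner : rfmJac n lam k g x ⟨0, hn0⟩ ⟨n - 1, hn1⟩ =
      lam 0 * lam n * k * (1 - x ⟨0, hn0⟩) * deriv g (lam n * x ⟨n - 1, hn1⟩) := by
    simp only [rfmJac, Matrix.of_apply]
    have key : (fun s => rfmField n lam k g (Function.update x ⟨n - 1, hn1⟩ s) ⟨0, hn0⟩)
        = fun s => lam 0 * k * g (lam n * s) * (1 - x ⟨0, hn0⟩) - rfmFlow n lam k g x 1 := by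
      funext s
      simp only [rfmField, Fin.val_mk]
      congr 1
      · have e1 : (0:ℕ) ≠ n - 1 := by omega
        simp [rfmFlow, extVec_update, e1, extVec_of_lt x hn0]
      · apply rfmFlow_update_eq
        · intro h0; omega
        · intro _; exact ⟨by simp only [Fin.val_mk]; omega, by simp only [Fin.val_mk]; omega⟩
    rw [key]
    have hcomp : HasDerivAt (fun s : ℝ => g (lam n * s))
        (deriv g (lam n * x ⟨n - 1, hn1⟩) * (lam n * 1)) (x ⟨n - 1, hn1⟩) :=
      HasDerivAt.comp _ ((hgdiff _).hasDerivAt)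
        ((hasDerivAt_id _).const_mul (lam n))
    have hfull : HasDerivAt
        (fun s => lam 0 * k * g (lam n * s) * (1 - x ⟨0, hn0⟩) - rfmFlow n lam k g x 1)
        (lam 0 * lam n * k * (1 - x ⟨0, hn0⟩) * deriv g (lam n * x ⟨n - 1, hn1⟩))
        (x ⟨n - 1, hn1⟩) := by
      have h1 := ((hcomp.const_mul (lam 0 * k)).mul_const (1 - x ⟨0, hn0⟩)).sub_const
        (rfmFlow n lam k g x 1)
      exact h1.congr_deriv (by ring)
    exact hfull.deriv
  refine ⟨?_, hcorner, ?_, ?_⟩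
  · intro i h
    have hsup : rfmJac n lam k g x i ⟨i.val + 1, h⟩ = lam (i.val + 1) * x i := by
      simp only [rfmJac, Matrix.of_apply]
      have key : (fun s => rfmField n lam k g (Function.update x ⟨i.val + 1, h⟩ s) i)
          = fun s => rfmFlow n lam k g x i.val - lam (i.val + 1) * x i * (1 - s) := by
        funext s
        simp only [rfmField]
        congr 1
        · apply rfmFlow_update_eq
          · intro h0
            exact ⟨by simp only [Fin.val_mk]; omega, by simp only [Fin.val_mk]; omega⟩
          · intro h0
            exact ⟨by simp only [Fin.val_mk]; omega, by simp only [Fin.val_mk]; omega⟩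
        · have e1 : i.val + 1 ≠ 0 := by omega
          have e2 : i.val + 1 ≠ n := by omega
          have e4 : i.val ≠ i.val + 1 := by omega
          simp [rfmFlow, extVec_update, e1, e2, e4, extVec_of_lt x i.isLt]
      rw [key]
      exact deriv_form1 _ _ _
    have hsub : rfmJac n lam k g x ⟨i.val + 1, h⟩ i
        = lam (i.val + 1) * (1 - x ⟨i.val + 1, h⟩) := by
      simp only [rfmJac, Matrix.of_apply]
      have key : (fun s => rfmField n lam k g (Function.update x i s) ⟨i.val + 1, h⟩)
          = fun s => lam (i.val + 1) * s * (1 - x ⟨i.val + 1, h⟩)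
              - rfmFlow n lam k g x (i.val + 1 + 1) := by
        funext s
        simp only [rfmField, Fin.val_mk]
        congr 1
        · have e1 : i.val + 1 ≠ 0 := by omega
          have e2 : i.val + 1 ≠ n := by omega
          have e4 : i.val + 1 ≠ i.val := by omega
          simp [rfmFlow, extVec_update, e1, e2, e4, extVec_of_lt x h]
        · apply rfmFlow_update_eq
          · intro h0; omega
          · intro _; exact ⟨by omega, by omega⟩
      rw [key]
      exact deriv_form2 _ _ _ _
    refine ⟨hsup, ?_, hsub, ?_⟩
    · rw [hsup]
      exact mul_nonneg (hlam _ (by omega)).le (hx i).1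
    · rw [hsub]
      exact mul_nonneg (hlam _ (by omega)).le (by linarith [(hx ⟨i.val + 1, h⟩).2])
  · rw [hcorner]
    have hA : 0 ≤ lam 0 * lam n * k * (1 - x ⟨0, hn0⟩) :=
      mul_nonneg (mul_nonneg (mul_nonneg (hlam 0 (by omega)).le (hlam n le_rfl).le) hk.le)
        (by linarith [(hx ⟨0, hn0⟩).2])
    have hd : deriv g (lam n * x ⟨n - 1, hn1⟩) ≤ 0 :=
      hder_le _ (mul_nonneg (hlam n le_rfl).le (hx _).1)
    exact mul_nonpos_of_nonneg_of_nonpos hA hd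
  · intro i j hij hj1 hi1 hcor
    have hvne : i.val ≠ j.val := fun hv => hij (Fin.ext hv)
    have hjlt : j.val < n := j.isLt
    simp only [rfmJac, Matrix.of_apply]
    have key : (fun s => rfmField n lam k g (Function.update x j s) i)
        = fun _ => rfmField n lam k g x i := by
      funext s
      simp only [rfmField]
      congr 1
      · apply rfmFlow_update_eq
        · intro h0; exact ⟨by omega, by omega⟩
        · intro h0; exact ⟨by omega, by omega⟩
      · apply rfmFlow_update_eq
        · intro h0; omega
        · intro _; exact ⟨by omega, by omega⟩
    rw [key]
    exact deriv_const _ _
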